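/- Let N = n·m where n and m are coprime natural numbers both different from 1, and suppose m is odd and not divisible by 3. Then there exists an integer k with 1 ≤ k ≤ N−1 such that k is coprime to N and the (k mod N)-monomial minimal solution of (E_N) is reducible; moreover its size is 6m if n > 2 and 3m if n = 2. -/

import Mathlib

open Matrix

/-- The elementary matrix `[[a, -1], [1, 0]]` over `ZMod N`. -/
def genMat {N : ℕ} (a : ZMod N) : Matrix (Fin 2) (Fin 2) (ZMod N) :=
  !![a, -1; 1, 0]

/-- `Mword [a₁, …, aₙ]` is the matrix `Mₙ(a₁, …, aₙ) = genMat aₙ * ⋯ * genMat a₁`. -/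
def Mword {N : ℕ} (l : List (ZMod N)) : Matrix (Fin 2) (Fin 2) (ZMod N) :=
  (l.reverse.map genMat).prod

/-- A tuple (encoded as a list) is a solution of `(E_N)` if its matrix is `±Id`. -/
def IsSolutionE {N : ℕ} (l : List (ZMod N)) : Prop :=
  Mword l = 1 ∨ Mword l = -1

/-- The size of the `k`-monomial minimal solution of `(E_N)`: the least positive `n`
such that the constant `n`-tuple `(k, …, k)` is a solution of `(E_N)`. -/
noncomputable def monomialSize (N : ℕ) (k : ZMod N) : ℕ :=
  sInf {n : ℕ | 0 < n ∧ IsSolutionE (List.replicate n k)}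

/-- The `k`-monomial minimal solution of `(E_N)`. -/
noncomputable def monoSol (N : ℕ) (k : ZMod N) : List (ZMod N) :=
  List.replicate (monomialSize N k) k

/-- The sum `⊕` of two tuples:
`(a₁,…,aₘ) ⊕ (b₁,…,bₗ) = (a₁+bₗ, a₂, …, aₘ₋₁, aₘ+b₁, b₂, …, bₗ₋₁)`. -/
def oplus {N : ℕ} (a b : List (ZMod N)) : List (ZMod N) :=
  (a.headD 0 + b.getLastD 0) ::
    ((a.drop 1).dropLast ++ (a.getLastD 0 + b.headD 0) :: (b.drop 1).dropLast)

/-- Two tuples are equivalent (`∼`) if one is obtained from the other by a cyclic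
permutation, possibly composed with order reversal. -/
def TupEquiv {N : ℕ} (c d : List (ZMod N)) : Prop :=
  (∃ i, d = c.rotate i) ∨ (∃ i, d = c.reverse.rotate i)

/-- A tuple is reducible if it is equivalent to a sum `a ⊕ b` where `b` is a solution of
`(E_N)` and both `a`, `b` have length at least `3`. -/
def IsReducibleE {N : ℕ} (c : List (ZMod N)) : Prop :=
  ∃ a b : List (ZMod N), 3 ≤ a.length ∧ 3 ≤ b.length ∧ IsSolutionE b ∧
    TupEquiv c (oplus a b)

/-- An irreducible solution of `(E_N)`: a solution of size at least `3` that is not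
reducible (the solution `(0,0)` is not considered irreducible). -/
def IsIrreducibleE {N : ℕ} (c : List (ZMod N)) : Prop :=
  IsSolutionE c ∧ 3 ≤ c.length ∧ ¬ IsReducibleE c

/-- A reducible solution of `(E_N)`: a solution that is not irreducible. -/
def IsReducibleSol {N : ℕ} (c : List (ZMod N)) : Prop :=
  IsSolutionE c ∧ ¬ IsIrreducibleE c

/-- `N` is monomially irreducible if for every nonzero `k ∈ ZMod N` the `k`-monomial
minimal solution of `(E_N)` is irreducible. -/
def MonomiallyIrreducible (N : ℕ) : Prop :=
  ∀ k : ZMod N, k ≠ 0 → IsIrreducibleE (monoSol N k)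

/-- `N` is quasi monomially irreducible if for every integer `k` coprime to `N` the
`(k mod N)`-monomial minimal solution of `(E_N)` is irreducible. -/
def QuasiMonomiallyIrreducible (N : ℕ) : Prop :=
  ∀ k : ℤ, Int.gcd k (N : ℤ) = 1 → IsIrreducibleE (monoSol N (k : ZMod N))

/-- `N` is semi monomially irreducible: if `N` is even but not divisible by `4`, this
requires that for every integer `a` coprime to `N/2` the `(2a mod N)`-monomial minimal
solution of `(E_N)` is irreducible; otherwise (i.e. `N` odd or divisible by `4`), it
requires the same for every integer `a` coprime to `N`. -/
def SemiMonomiallyIrreducible (N : ℕ) : Prop :=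
  if 2 ∣ N ∧ ¬ (4 ∣ N) then
    ∀ a : ℤ, Int.gcd a ((N / 2 : ℕ) : ℤ) = 1 →
      IsIrreducibleE (monoSol N ((2 * a : ℤ) : ZMod N))
  else
    ∀ a : ℤ, Int.gcd a (N : ℤ) = 1 →
      IsIrreducibleE (monoSol N ((2 * a : ℤ) : ZMod N))

/-!
Take `k ≡ 1 [MOD n]` and `k ≡ 2 [MOD m]`, and let `M = [[k, -1], [1, 0]]`. Modulo `n`, `M`
becomes `[[1, -1], [1, 0]]`, whose cube is `-1`: its order is `6`, or `3` when `n = 2`. Modulo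
`m`, `M^j` becomes `[[j + 1, -j], [j, 1 - j]]`, which is `1` iff `m ∣ j` and never `-1` since `m`
is odd. By the Chinese remainder theorem `(k, …, k)` of length `j` is a solution iff `6m ∣ j`
(resp. `3m ∣ j`).

For reducibility pick `s ≡ 1 [MOD 6]` (resp. `[MOD 3]`) with `m ∣ s`. Then `M^s` has top left
entry `1`; as its off-diagonal entries are opposite and its determinant is `1`,
`M^s = [[1, -y], [y, 1 - y²]]`, and `(y, k, …, k, y)` with `s` middle entries has matrix `-1`. Hence
`(k, …, k) = (k - y, k, …, k, k - y) ⊕ (y, k, …, k, y)`.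
-/

section GenMat

variable {N : ℕ}

lemma genMat_map {M : ℕ} (φ : ZMod N →+* ZMod M) (a : ZMod N) :
    (genMat a).map φ = genMat (φ a) := by
  ext i j; fin_cases i <;> fin_cases j <;> simp [genMat]

lemma Mword_replicate (k : ZMod N) (j : ℕ) : Mword (List.replicate j k) = genMat k ^ j := by
  rw [Mword, List.reverse_replicate, List.map_replicate, List.prod_replicate]

lemma Mword_cons_append_singleton (x : ZMod N) (l : List (ZMod N)) :
    Mword (x :: (l ++ [x])) = genMat x * Mword l * genMat x := by
  simp [Mword, mul_assoc]

lemma genMat_pow_zero_one (a : ZMod N) (s : ℕ) :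
    (genMat a ^ s) 0 1 = -(genMat a ^ s) 1 0 := by
  cases s with
  | zero => simp
  | succ s =>
    have hr : (genMat a ^ (s + 1)) 0 1 = -(genMat a ^ s) 0 0 := by
      rw [pow_succ, genMat, Matrix.mul_apply, Fin.sum_univ_two]; simp
    have hl : (genMat a ^ (s + 1)) 1 0 = (genMat a ^ s) 0 0 := by
      rw [pow_succ', genMat, Matrix.mul_apply, Fin.sum_univ_two]; simp
    rw [hr, hl]

lemma genMat_pow_map {M : ℕ} (φ : ZMod N →+* ZMod M) (a : ZMod N) (s : ℕ) :
    (genMat a ^ s).map φ = genMat (φ a) ^ s := by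
  rw [← genMat_map, ← RingHom.mapMatrix_apply, ← RingHom.mapMatrix_apply, map_pow]

lemma map_genMat_pow_apply {M : ℕ} (φ : ZMod N →+* ZMod M) (a : ZMod N) (s : ℕ)
    (i j : Fin 2) :
    φ ((genMat a ^ s) i j) = (genMat (φ a) ^ s) i j := by
  rw [← genMat_pow_map]; rfl

lemma genMat_one_pow_three : genMat (1 : ZMod N) ^ 3 = -1 := by
  ext i j; fin_cases i <;> fin_cases j <;> simp [genMat, pow_succ]

lemma orderOf_genMat_one (h : (-1 : ZMod N) ≠ 1) : orderOf (genMat (1 : ZMod N)) = 6 := by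
  have hsq : genMat (1 : ZMod N) ^ 2 ≠ 1 := fun h2 => by
    have h00 := congrFun (congrFun h2 0) 0
    simp [genMat, sq, Matrix.mul_apply] at h00
    exact h (by linear_combination 2 * h00)
  have hcube : genMat (1 : ZMod N) ^ 3 ≠ 1 := fun h3 => h (by
    simpa using congrFun (congrFun (genMat_one_pow_three.symm.trans h3) 0) 0)
  refine orderOf_eq_of_pow_and_pow_div_prime (by norm_num)
    (by rw [show 6 = 3 * 2 by rfl, pow_mul, genMat_one_pow_three]; simp) fun p hp hp6 => ?_
  rcases (Nat.Prime.dvd_mul hp).1 (show p ∣ 2 * 3 from hp6) with h2 | h3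
  · rwa [(Nat.prime_dvd_prime_iff_eq hp Nat.prime_two).1 h2]
  · rwa [(Nat.prime_dvd_prime_iff_eq hp Nat.prime_three).1 h3]

lemma orderOf_genMat_one_zmod_two : orderOf (genMat (1 : ZMod 2)) = 3 :=
  orderOf_eq_prime (genMat_one_pow_three.trans (by decide)) (by decide)

lemma genMat_two_pow (j : ℕ) :
    genMat (2 : ZMod N) ^ j = !![(j : ZMod N) + 1, -j; j, 1 - j] := by
  induction j with
  | zero => ext i j; fin_cases i <;> fin_cases j <;> simp
  | succ j ih =>
    rw [pow_succ, ih, genMat]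
    ext i j; fin_cases i <;> fin_cases j <;> simp [Matrix.mul_apply] <;> ring

lemma orderOf_genMat_two : orderOf (genMat (2 : ZMod N)) = N := by
  have key : ∀ j : ℕ, genMat (2 : ZMod N) ^ j = 1 ↔ N ∣ j := fun j => by
    rw [genMat_two_pow, ← ZMod.natCast_eq_zero_iff]
    constructor
    · intro h; simpa using congrFun (congrFun h 1) 0
    · intro h; ext i j; fin_cases i <;> fin_cases j <;> simp [h]
  exact Nat.dvd_antisymm (orderOf_dvd_iff_pow_eq_one.2 ((key N).2 dvd_rfl))
    ((key _).1 (pow_orderOf_eq_one _))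

lemma genMat_two_pow_ne_neg_one (hN : 2 < N) (j : ℕ) : genMat (2 : ZMod N) ^ j ≠ -1 := by
  intro h
  have h10 : (j : ZMod N) = 0 := by simpa [genMat_two_pow] using congrFun (congrFun h 1) 0
  have h00 : (j : ZMod N) + 1 = -1 := by simpa [genMat_two_pow] using congrFun (congrFun h 0) 0
  have h2 : ((2 : ℕ) : ZMod N) = 0 := by rw [h10] at h00; push_cast; linear_combination h00
  rw [ZMod.natCast_eq_zero_iff] at h2
  exact absurd (Nat.le_of_dvd two_pos h2) (by omega)

lemma genMat_pow_eq_of_zero_zero {k : ZMod N} {s : ℕ} (h : (genMat k ^ s) 0 0 = 1) :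
    genMat k ^ s = !![1, -(genMat k ^ s) 1 0; (genMat k ^ s) 1 0, 1 - (genMat k ^ s) 1 0 ^ 2] := by
  have hdet : (genMat k ^ s).det = 1 := by
    rw [Matrix.det_pow, genMat, Matrix.det_fin_two_of]; simp
  rw [Matrix.det_fin_two, h, genMat_pow_zero_one] at hdet
  ext i j; fin_cases i <;> fin_cases j
  · exact h
  · exact genMat_pow_zero_one k s
  · rfl
  · exact (by linear_combination hdet : (genMat k ^ s) 1 1 = 1 - (genMat k ^ s) 1 0 ^ 2)

lemma Mword_sandwich_eq_neg_one {k : ZMod N} {s : ℕ} (h : (genMat k ^ s) 0 0 = 1) :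
    Mword ((genMat k ^ s) 1 0 :: (List.replicate s k ++ [(genMat k ^ s) 1 0])) = -1 := by
  rw [Mword_cons_append_singleton, Mword_replicate, genMat_pow_eq_of_zero_zero h]
  ext i j; fin_cases i <;> fin_cases j <;> simp [genMat, Matrix.mul_apply]
  ring

lemma isReducibleE_replicate {k : ZMod N} {s L : ℕ} (hs : 1 ≤ s) (hsL : s + 3 ≤ L)
    (h : (genMat k ^ s) 0 0 = 1) : IsReducibleE (List.replicate L k) := by
  set y := (genMat k ^ s) 1 0
  refine ⟨(k - y) :: (List.replicate (L - s - 2) k ++ [k - y]),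
    y :: (List.replicate s k ++ [y]), by simp; omega, by simp; omega,
    Or.inr (Mword_sandwich_eq_neg_one h), Or.inl ⟨0, ?_⟩⟩
  simp only [oplus, List.rotate_zero, List.headD_cons, List.getLastD_cons, List.getLastD_concat,
    List.drop_one, List.tail_cons, List.dropLast_concat, sub_add_cancel, ← List.replicate_succ,
    ← List.replicate_add]
  congr 1
  omega

lemma monomialSize_eq_orderOf {k : ZMod N} (hneg : ∀ j, genMat k ^ j ≠ -1)
    (hpos : 0 < orderOf (genMat k)) : monomialSize N k = orderOf (genMat k) := by
  have hsol : ∀ j, IsSolutionE (List.replicate j k) ↔ orderOf (genMat k) ∣ j := fun j => by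
    rw [IsSolutionE, Mword_replicate, orderOf_dvd_iff_pow_eq_one, or_iff_left (hneg j)]
  have hmem : orderOf (genMat k) ∈ {j | 0 < j ∧ IsSolutionE (List.replicate j k)} :=
    ⟨hpos, (hsol _).2 dvd_rfl⟩
  refine le_antisymm (Nat.sInf_le hmem) (le_csInf ⟨_, hmem⟩ ?_)
  rintro j ⟨hj, hjsol⟩
  exact Nat.le_of_dvd hj ((hsol j).1 hjsol)

end GenMat

section CRT

variable {n m : ℕ}

lemma ZMod.eq_of_castHom_eq_of_coprime (hcop : n.Coprime m) {z w : ZMod (n * m)}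
    (hn : ZMod.castHom (dvd_mul_right n m) (ZMod n) z = ZMod.castHom (dvd_mul_right n m) _ w)
    (hm : ZMod.castHom (dvd_mul_left m n) (ZMod m) z = ZMod.castHom (dvd_mul_left m n) _ w) :
    z = w := by
  apply (ZMod.chineseRemainder hcop).injective
  simp only [ZMod.chineseRemainder, RingEquiv.coe_mk, Equiv.coe_fn_mk, ZMod.castHom_apply]
  exact Prod.ext (by simpa [Prod.fst_zmod_cast] using hn) (by simpa [Prod.snd_zmod_cast] using hm)

lemma orderOf_genMat_eq_lcm (hcop : n.Coprime m) (K : ZMod (n * m)) :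
    orderOf (genMat K) = (orderOf (genMat (ZMod.castHom (dvd_mul_right n m) (ZMod n) K))).lcm
      (orderOf (genMat (ZMod.castHom (dvd_mul_left m n) (ZMod m) K))) := by
  set φn := ZMod.castHom (dvd_mul_right n m) (ZMod n)
  set φm := ZMod.castHom (dvd_mul_left m n) (ZMod m)
  let f := φn.mapMatrix.toMonoidHom.prod
    (φm.mapMatrix.toMonoidHom : Matrix (Fin 2) (Fin 2) _ →* _)
  have hf : Function.Injective f := fun P Q hPQ => by
    ext i j
    exact ZMod.eq_of_castHom_eq_of_coprime hcop (congrFun (congrFun (congrArg Prod.fst hPQ) i) j)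
      (congrFun (congrFun (congrArg Prod.snd hPQ) i) j)
  rw [← orderOf_injective f hf, Prod.orderOf]
  simp [f, genMat_map]

lemma exists_genMat_pow_zero_zero_eq_one (hcop : n.Coprime m) (hm : 2 < m) {K : ZMod (n * m)}
    (hKn : ZMod.castHom (dvd_mul_right n m) (ZMod n) K = 1)
    (hKm : ZMod.castHom (dvd_mul_left m n) (ZMod m) K = 2) {o : ℕ}
    (ho : orderOf (genMat (1 : ZMod n)) = o) (hom : o.Coprime m) (ho1 : 1 < o) :
    ∃ s, 1 ≤ s ∧ s + 3 ≤ o * m ∧ (genMat K ^ s) 0 0 = 1 := by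
  let s := Nat.chineseRemainder hom 1 0
  have hlt : (s : ℕ) < o * m := Nat.chineseRemainder_lt_mul hom 1 0 (by omega) (by omega)
  obtain ⟨hso, hsm⟩ := s.2
  have hs1 : (s : ℕ) % o = 1 :=
    (show (s : ℕ) % o = 1 % o from hso).trans (Nat.mod_eq_of_lt (by omega))
  obtain ⟨c, hc⟩ : m ∣ s := Nat.modEq_zero_iff_dvd.1 hsm
  refine ⟨s, Nat.pos_of_ne_zero fun h => by simp [h] at hs1, ?_, ?_⟩
  · rw [hc] at hlt ⊢
    have : c < o := by nlinarith
    nlinarith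
  · apply ZMod.eq_of_castHom_eq_of_coprime hcop
    · rw [map_one, map_genMat_pow_apply, hKn, ← pow_mod_orderOf, ho, hs1, pow_one]
      simp [genMat]
    · rw [map_one, map_genMat_pow_apply, hKm, orderOf_dvd_iff_pow_eq_one.1
        (by rw [orderOf_genMat_two]; exact ⟨c, hc⟩), Matrix.one_apply_eq]

lemma isReducibleSol_monoSol_of_castHom (hcop : n.Coprime m) (hm : 2 < m) {K : ZMod (n * m)}
    (hKn : ZMod.castHom (dvd_mul_right n m) (ZMod n) K = 1)
    (hKm : ZMod.castHom (dvd_mul_left m n) (ZMod m) K = 2) {o : ℕ}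
    (ho : orderOf (genMat (1 : ZMod n)) = o) (hom : o.Coprime m) (ho1 : 1 < o) :
    IsReducibleSol (monoSol (n * m) K) ∧ monomialSize (n * m) K = o * m := by
  have hord : orderOf (genMat K) = o * m := by
    rw [orderOf_genMat_eq_lcm hcop, hKn, hKm, ho, orderOf_genMat_two, hom.lcm_eq_mul]
  have hneg : ∀ j, genMat K ^ j ≠ -1 := fun j h => by
    have := congrArg (ZMod.castHom (dvd_mul_left m n) (ZMod m)).mapMatrix h
    rw [map_neg, map_one, RingHom.mapMatrix_apply, genMat_pow_map, hKm] at this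
    exact genMat_two_pow_ne_neg_one hm j this
  have hsize : monomialSize (n * m) K = o * m := by
    have hpos : 0 < orderOf (genMat K) := by rw [hord]; exact Nat.mul_pos (by omega) (by omega)
    rw [monomialSize_eq_orderOf hneg hpos, hord]
  obtain ⟨s, hs, hsL, hs00⟩ := exists_genMat_pow_zero_zero_eq_one hcop hm hKn hKm ho hom ho1
  rw [monoSol, hsize]
  refine ⟨⟨Or.inl ?_, fun hirr => hirr.2.2 (isReducibleE_replicate hs hsL hs00)⟩, rfl⟩
  rw [Mword_replicate, ← hord, pow_orderOf_eq_one]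

end CRT

/-- if `N = n·m` with `n, m` coprime, both `≠ 1`, `m` odd and not divisible
by `3`, then there is `1 ≤ k ≤ N - 1` coprime to `N` such that the `(k mod N)`-monomial
minimal solution of `(E_N)` is reducible, of size `6m` if `n > 2` and `3m` otherwise. -/
theorem stmt_13 (n m : ℕ) (hn : n ≠ 1) (hm : m ≠ 1) (hcop : Nat.Coprime n m)
    (hmodd : Odd m) (hm3 : ¬ 3 ∣ m) :
    ∃ k : ℕ, 1 ≤ k ∧ k ≤ n * m - 1 ∧ Nat.Coprime k (n * m) ∧
      IsReducibleSol (monoSol (n * m) (k : ZMod (n * m))) ∧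
      monomialSize (n * m) (k : ZMod (n * m)) = (if 2 < n then 6 * m else 3 * m) := by
  have hm2 : 2 < m := by obtain ⟨j, rfl⟩ := hmodd; omega
  have hn0 : n ≠ 0 := by rintro rfl; exact hm ((Nat.coprime_zero_left m).1 hcop)
  have h2m : Nat.Coprime 2 m := Nat.coprime_two_left.2 hmodd
  have h3m : Nat.Coprime 3 m := (Nat.Prime.coprime_iff_not_dvd Nat.prime_three).2 hm3
  obtain ⟨o, ho, hom, ho1, hL⟩ : ∃ o, orderOf (genMat (1 : ZMod n)) = o ∧ o.Coprime m ∧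
      1 < o ∧ o * m = if 2 < n then 6 * m else 3 * m := by
    split_ifs with h
    · have : Fact (2 < n) := ⟨h⟩
      exact ⟨6, orderOf_genMat_one ZMod.neg_one_ne_one, Nat.Coprime.mul_left h2m h3m,
        by norm_num, rfl⟩
    · obtain rfl : n = 2 := by omega
      exact ⟨3, orderOf_genMat_one_zmod_two, h3m, by norm_num, rfl⟩
  obtain ⟨k, hkn, hkm, hk⟩ : ∃ k, k ≡ 1 [MOD n] ∧ k ≡ 2 [MOD m] ∧ k < n * m :=
    ⟨_, (Nat.chineseRemainder hcop 1 2).2.1, (Nat.chineseRemainder hcop 1 2).2.2,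
      Nat.chineseRemainder_lt_mul hcop 1 2 hn0 (by omega)⟩
  have hck : k.Coprime (n * m) := Nat.Coprime.mul_right
    (by rw [Nat.Coprime, hkn.gcd_eq, Nat.gcd_one_left]) (by rw [Nat.Coprime, hkm.gcd_eq]; exact h2m)
  have hk0 : k ≠ 0 := by rintro rfl; exact hm (mul_eq_one.1 ((Nat.coprime_zero_left _).1 hck)).2
  refine ⟨k, by omega, by omega, hck,
    hL ▸ isReducibleSol_monoSol_of_castHom hcop hm2 ?_ ?_ ho hom ho1⟩
  · rw [map_natCast, ← Nat.cast_one]; exact (ZMod.natCast_eq_natCast_iff _ _ _).2 hkn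
  · rw [map_natCast, ← Nat.cast_ofNat]; exact (ZMod.natCast_eq_natCast_iff _ _ _).2 hkm
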